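/- Let N_t ≥ 1, d ≥ 2, p ≥ 1 and r ≥ 2 be natural numbers. Then the vertex-based communication overhead strictly exceeds the spline-based communication overhead: N_t·d·r²·(p+1)² > N_t·d·(r+p)² + 2·(r+2p+1). -/
import Mathlib
/-- For `N_t ≥ 1`, `d ≥ 2`, `p ≥ 1`, `r ≥ 2`, the vertex-based communication overhead
`N_t·d·r²·(p+1)²` strictly exceeds the spline-based overhead
`N_t·d·(r+p)² + 2·(r+2p+1)`. -/
theorem vertex_overhead_exceeds_spline_overhead
    (Nt d p r : ℕ) (hNt : 1 ≤ Nt) (hd : 2 ≤ d) (hp : 1 ≤ p) (hr : 2 ≤ r) :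
    Nt * d * (r + p) ^ 2 + 2 * (r + 2 * p + 1) < Nt * d * r ^ 2 * (p + 1) ^ 2 := by
  have h2 : 2 ≤ Nt * d := le_trans hd (Nat.le_mul_of_pos_left d hNt)
  have key : r + 2 * p + 1 + (r + p) ^ 2 < r ^ 2 * (p + 1) ^ 2 := by
    nlinarith [Nat.mul_le_mul hp hr, Nat.mul_le_mul hr hr]
  have h3 := Nat.mul_lt_mul_of_lt_of_le key (le_refl (Nt * d)) (lt_of_lt_of_le two_pos h2)
  nlinarith [h3, Nat.mul_le_mul (le_refl (r + 2 * p + 1)) h2]
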